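/- arXiv:1905.04369 — 3 statements merged into one kernel-verified Lean document; each statement's English description precedes it below -/
import Mathlib

section
/- Let m be a nonzero integer. Every binary quadratic form over ℤ[1/m] of discriminant 1 − 4m is SL₂(ℤ[1/m])-equivalent to a form all of whose coefficients lie in the image of ℤ in ℤ[1/m]. -/
/-- A binary quadratic form `a x² + b x y + c y²` over a commutative ring. -/
structure BQF (R : Type*) [CommRing R] where
  a : R
  b : R
  c : R

namespace BQF

variable {R S : Type*} [CommRing R] [CommRing S]

/-- The discriminant `b² - 4ac`. -/
def disc (Q : BQF R) : R := Q.b ^ 2 - 4 * Q.a * Q.c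

/-- The action of `g ∈ SL₂(R)` on forms, `(g · Q)(v) = Q(g · v)`:
the coefficients are obtained by expanding `Q (g₀₀ x + g₀₁ y, g₁₀ x + g₁₁ y)`. -/
def act (g : Matrix.SpecialLinearGroup (Fin 2) R) (Q : BQF R) : BQF R where
  a := Q.a * g.1 0 0 ^ 2 + Q.b * g.1 0 0 * g.1 1 0 + Q.c * g.1 1 0 ^ 2
  b := 2 * Q.a * g.1 0 0 * g.1 0 1 + Q.b * (g.1 0 0 * g.1 1 1 + g.1 0 1 * g.1 1 0)
        + 2 * Q.c * g.1 1 0 * g.1 1 1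
  c := Q.a * g.1 0 1 ^ 2 + Q.b * g.1 0 1 * g.1 1 1 + Q.c * g.1 1 1 ^ 2

/-- Two forms are `SL₂(R)`-equivalent if they are in the same orbit. -/
def Equiv (Q₁ Q₂ : BQF R) : Prop := ∃ g, act g Q₁ = Q₂

/-- Base change of a binary quadratic form along a ring homomorphism. -/
def map (f : R →+* S) (Q : BQF R) : BQF S := ⟨f Q.a, f Q.b, f Q.c⟩

theorem disc_map (f : R →+* S) (Q : BQF R) : (Q.map f).disc = f Q.disc := by
  simp [disc, map, map_sub, map_mul, map_pow, map_ofNat]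

end BQF

/-- The number of `SL₂(R)`-equivalence classes of binary quadratic forms over `R`
of discriminant `D`. -/
noncomputable def classCount (R : Type*) [CommRing R] (D : R) : ℕ :=
  Nat.card (Quot (fun Q₁ Q₂ : {Q : BQF R // Q.disc = D} => BQF.Equiv Q₁.1 Q₂.1))

/-!
Clearing denominators writes `Q = m⁻ᵏ Q₀` with `Q₀` integral of discriminant `m²ᵏ (1 - 4m)`.
Since `1 - 4m` is a square modulo every power of `m`, `Q₀` primitively represents integers
divisible by arbitrarily high powers of `m`: if `S² ≡ disc Q₀` and `a ≠ 0`, the vector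
`(S - b, 2a)`, made primitive, does. Moving a value divisible by `m³ᵏ` into the `a`-coefficient
by `SL₂(ℤ)` and rescaling by `diag(m⁻ᵏ, mᵏ)` makes `a` and `c` integral, and then so is `b`, as
`b² = 1 - 4m + 4ac`.
-/

open scoped MatrixGroups

namespace BQF

variable {R S : Type*} [CommRing R] [CommRing S]

def eval (Q : BQF R) (x y : R) : R := Q.a * x ^ 2 + Q.b * x * y + Q.c * y ^ 2

instance : SMul R (BQF R) := ⟨fun r Q => ⟨r * Q.a, r * Q.b, r * Q.c⟩⟩

theorem act_mul (g h : SL(2, R)) (Q : BQF R) : act (g * h) Q = act h (act g Q) := by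
  simp only [act, Matrix.SpecialLinearGroup.coe_mul, Matrix.mul_apply, Fin.sum_univ_two, mk.injEq]
  refine ⟨by ring, by ring, by ring⟩

theorem Equiv.trans {Q₁ Q₂ Q₃ : BQF R} : Equiv Q₁ Q₂ → Equiv Q₂ Q₃ → Equiv Q₁ Q₃
  | ⟨g, hg⟩, ⟨h, hh⟩ => ⟨g * h, by rw [act_mul, hg, hh]⟩

theorem disc_act (g : SL(2, R)) (Q : BQF R) : (act g Q).disc = Q.disc := by
  have hdet : g 0 0 * g 1 1 - g 0 1 * g 1 0 = 1 := by rw [← Matrix.det_fin_two]; exact g.2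
  simp only [act, disc]
  linear_combination (Q.b ^ 2 - 4 * Q.a * Q.c) * (g 0 0 * g 1 1 - g 0 1 * g 1 0 + 1) * hdet

theorem Equiv.disc_eq {Q₁ Q₂ : BQF R} : Equiv Q₁ Q₂ → Q₂.disc = Q₁.disc
  | ⟨g, hg⟩ => hg ▸ disc_act g Q₁

theorem act_smul (g : SL(2, R)) (r : R) (Q : BQF R) : act g (r • Q) = r • act g Q := by
  change act g ⟨_, _, _⟩ = ⟨_, _, _⟩
  simp only [act, mk.injEq]
  refine ⟨by ring, by ring, by ring⟩

theorem disc_smul (r : R) (Q : BQF R) : (r • Q).disc = r ^ 2 * Q.disc := by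
  change disc ⟨_, _, _⟩ = _
  simp only [disc]
  ring

theorem act_map (f : R →+* S) (g : SL(2, R)) (Q : BQF R) :
    act (Matrix.SpecialLinearGroup.map f g) (Q.map f) = (act g Q).map f := by
  simp [act, map, map_ofNat]

theorem exists_act_a_eq_eval {x y : R} (h : IsCoprime x y) (Q : BQF R) :
    ∃ g : SL(2, R), (act g Q).a = Q.eval x y := by
  obtain ⟨u, v, huv⟩ := h
  exact ⟨⟨!![x, -v; y, u], by rw [Matrix.det_fin_two_of]; linear_combination huv⟩, rfl⟩

theorem exists_equiv_a_ne_zero {Q : BQF R} (hQ : Q.disc ≠ 0) : ∃ Q', Equiv Q Q' ∧ Q'.a ≠ 0 := by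
  by_cases ha : Q.a = 0
  · by_cases hc : Q.c = 0
    · have hb : Q.b ≠ 0 := fun hb => hQ (by simp [disc, ha, hb, hc])
      refine ⟨_, ⟨⟨!![1, 0; 1, 1], by simp⟩, rfl⟩, ?_⟩
      simpa [act, ha, hc] using hb
    · refine ⟨_, ⟨⟨!![0, -1; 1, 0], by simp⟩, rfl⟩, ?_⟩
      simpa [act] using hc
  · exact ⟨Q, ⟨1, by simp [act]⟩, ha⟩

def diagUnit (u : Rˣ) : SL(2, R) := ⟨!![↑u⁻¹, 0; 0, ↑u], by simp⟩

theorem act_diagUnit (u : Rˣ) (Q : BQF R) :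
    act (diagUnit u) Q = ⟨Q.a * ↑u⁻¹ ^ 2, Q.b, Q.c * u ^ 2⟩ := by
  simp [act, diagUnit]

end BQF

theorem exists_pow_dvd_sq_sub_self_add (m : ℤ) (N : ℕ) : ∃ w : ℤ, m ^ N ∣ w ^ 2 - w + m := by
  suffices ∀ N : ℕ, ∃ w : ℤ, m ∣ w ∧ m ^ (N + 1) ∣ w ^ 2 - w + m from
    (this N).imp fun w hw => (pow_dvd_pow m N.le_succ).trans hw.2
  intro N
  induction N with
  | zero => exact ⟨0, dvd_zero m, by simp⟩
  | succ N ih =>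
    obtain ⟨w, hw, hN⟩ := ih
    -- `w ↦ w² + m` multiplies `w² - w + m` by `w² + w + m ≡ 0 (mod m)`.
    have hfactor : (w ^ 2 + m) ^ 2 - (w ^ 2 + m) + m = (w ^ 2 - w + m) * (w ^ 2 + w + m) := by ring
    refine ⟨w ^ 2 + m, dvd_add (dvd_pow hw two_ne_zero) dvd_rfl, ?_⟩
    rw [hfactor, pow_succ]
    exact mul_dvd_mul hN (dvd_add (dvd_add (dvd_pow hw two_ne_zero) hw) dvd_rfl)

theorem Nat.pow_dvd_of_pow_add_dvd_mul {m a M j : ℕ} (ha : a ≠ 0) (h : m ^ (j + a) ∣ a * M) :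
    m ^ j ∣ M := by
  rcases eq_or_ne M 0 with rfl | hM
  · exact dvd_zero _
  rcases eq_or_ne m 0 with rfl | hm
  · rw [zero_pow (by omega), zero_dvd_iff] at h
    exact absurd h (mul_ne_zero ha hM)
  rw [← Nat.factorization_le_iff_dvd (pow_ne_zero _ hm) hM]
  rw [← Nat.factorization_le_iff_dvd (pow_ne_zero _ hm) (mul_ne_zero ha hM)] at h
  intro p
  have hp := h p
  simp only [Nat.factorization_pow, Nat.factorization_mul ha hM, Finsupp.smul_apply, smul_eq_mul,
    Finsupp.add_apply] at hp ⊢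
  -- `v_p(a) < a`, so the extra `a` copies of `m` cannot all be absorbed by `a`.
  have hlt := Nat.factorization_lt p ha
  rcases Nat.eq_zero_or_pos (m.factorization p) with h0 | h0
  · simp [h0]
  · nlinarith

theorem Int.pow_dvd_of_pow_add_natAbs_dvd_mul {m A M : ℤ} {j : ℕ} (hA : A ≠ 0)
    (h : m ^ (j + A.natAbs) ∣ A * M) : m ^ j ∣ M := by
  rw [← Int.natAbs_dvd_natAbs, Int.natAbs_pow, Int.natAbs_mul] at h
  rw [← Int.natAbs_dvd_natAbs, Int.natAbs_pow]
  exact Nat.pow_dvd_of_pow_add_dvd_mul (Int.natAbs_ne_zero.mpr hA) h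

namespace BQF

theorem exists_isCoprime_a_mul_eval_eq (Q : BQF ℤ) (ha : Q.a ≠ 0) {S T : ℤ}
    (h : S ^ 2 - Q.disc = 4 * T) : ∃ x y, IsCoprime x y ∧ Q.a * Q.eval x y = y ^ 2 * T := by
  obtain ⟨d, x, y, hd, hxy, hx, hy⟩ :=
    Int.exists_gcd_one' (Int.gcd_pos_of_ne_zero_right (S - Q.b) (mul_ne_zero two_ne_zero ha))
  refine ⟨x, y, Int.isCoprime_iff_gcd_eq_one.mpr hxy, ?_⟩
  -- `Q(S - b, 2a) = a (S² - disc Q)`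
  have hval : (d : ℤ) ^ 2 * Q.eval x y = 4 * Q.a * T := by
    have : (d : ℤ) ^ 2 * Q.eval x y = Q.eval (S - Q.b) (2 * Q.a) := by rw [hx, hy, eval, eval]; ring
    rw [this, eval]
    rw [disc] at h
    linear_combination Q.a * h
  have hd0 : (d : ℤ) ^ 2 ≠ 0 := pow_ne_zero 2 (by exact_mod_cast hd.ne')
  refine mul_left_cancel₀ hd0 ?_
  linear_combination Q.a * hval + T * (2 * Q.a + y * d) * hy

theorem exists_pow_dvd_act_a (Q : BQF ℤ) (ha : Q.a ≠ 0) {m n : ℤ}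
    (hQ : Q.disc = n ^ 2 * (1 - 4 * m)) (j : ℕ) : ∃ g : SL(2, ℤ), m ^ j ∣ (act g Q).a := by
  obtain ⟨w, e, he⟩ := exists_pow_dvd_sq_sub_self_add m (j + Q.a.natAbs)
  -- `(2w - 1)² = 1 - 4m + 4 (w² - w + m)`
  obtain ⟨x, y, hxy, hval⟩ := Q.exists_isCoprime_a_mul_eval_eq ha (S := n * (2 * w - 1))
    (T := n ^ 2 * (m ^ (j + Q.a.natAbs) * e)) (by rw [hQ]; linear_combination 4 * n ^ 2 * he)
  obtain ⟨g, hg⟩ := exists_act_a_eq_eval hxy Q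
  refine ⟨g, hg ▸ Int.pow_dvd_of_pow_add_natAbs_dvd_mul ha ⟨y ^ 2 * n ^ 2 * e, ?_⟩⟩
  rw [hval]
  ring

end BQF

section Localization

variable {R : Type*} [CommRing R]

theorem algebraMap_away_injective [IsDomain R] {m : R} (hm : m ≠ 0) :
    Function.Injective (algebraMap R (Localization.Away m)) :=
  IsLocalization.injective _ (powers_le_nonZeroDivisors_of_noZeroDivisors hm)

theorem BQF.exists_map_eq_pow_smul {m : R} (Q : BQF (Localization.Away m)) :
    ∃ (k : ℕ) (Q₀ : BQF R), Q₀.map (algebraMap R (Localization.Away m)) =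
      algebraMap R (Localization.Away m) m ^ k • Q := by
  obtain ⟨⟨_, k, rfl⟩, h⟩ :=
    IsLocalization.exist_integer_multiples_of_finite (Submonoid.powers m) ![Q.a, Q.b, Q.c]
  choose X hX using h
  refine ⟨k, ⟨X 0, X 1, X 2⟩, ?_⟩
  simp only [Algebra.smul_def, map_pow] at hX
  exact congr (congr (congrArg BQF.mk (hX 0)) (hX 1)) (hX 2)

end Localization

section Away

variable {m : ℤ}

local notation "ι" => algebraMap ℤ (Localization.Away m)

theorem exists_eq_algebraMap_of_sq_eq (hm : m ≠ 0) {x : Localization.Away m} {n : ℤ}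
    (h : x ^ 2 = ι n) : ∃ X : ℤ, x = ι X := by
  obtain ⟨k, X₀, hX₀⟩ := IsLocalization.Away.surj m x
  have hsq : X₀ ^ 2 = (m ^ k) ^ 2 * n := algebraMap_away_injective hm <| by
    simp only [map_pow, map_mul, ← hX₀, ← h]
    ring
  obtain ⟨X, rfl⟩ := (Int.pow_dvd_pow_iff two_ne_zero).mp ⟨n, hsq⟩
  refine ⟨X, ((IsLocalization.Away.algebraMap_isUnit m).pow k).mul_left_cancel ?_⟩
  rw [mul_comm, hX₀, map_mul, map_pow, mul_comm]

theorem BQF.exists_equiv_integral_of_a_ne_zero (hm : m ≠ 0) {Q : BQF (Localization.Away m)}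
    (ha : Q.a ≠ 0) (hQ : Q.disc = ι (1 - 4 * m)) :
    ∃ Q' : BQF (Localization.Away m), Equiv Q Q' ∧ ∃ a b c : ℤ,
      Q'.a = ι a ∧ Q'.b = ι b ∧ Q'.c = ι c := by
  obtain ⟨k, Q₀, hQ₀⟩ := Q.exists_map_eq_pow_smul
  set u := (IsLocalization.Away.algebraMap_isUnit (S := Localization.Away m) m).unit ^ k
  have hu : (u : Localization.Away m) = ι m ^ k := by simp [u]
  have hQ₀a : Q₀.a ≠ 0 := by
    intro h0
    have h : ι Q₀.a = ↑u * Q.a := by rw [hu]; exact congrArg BQF.a hQ₀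
    rw [h0, map_zero, eq_comm, Units.mul_right_eq_zero] at h
    exact ha h
  have hQ₀disc : Q₀.disc = (m ^ k) ^ 2 * (1 - 4 * m) := algebraMap_away_injective hm <| by
    rw [← disc_map, hQ₀, disc_smul, hQ]
    simp
  obtain ⟨γ, A, hA⟩ := Q₀.exists_pow_dvd_act_a hQ₀a hQ₀disc (3 * k)
  set Q₁ := act (Matrix.SpecialLinearGroup.map ι γ) Q
  have h₁ : (act γ Q₀).map ι = ι m ^ k • Q₁ := by rw [← act_map, hQ₀, act_smul]
  set Q₂ := act (diagUnit u) Q₁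
  have h₁a : ↑u * Q₁.a = ↑u ^ 3 * ι A :=
    calc ↑u * Q₁.a = ι (act γ Q₀).a := by rw [hu]; exact (congrArg BQF.a h₁).symm
      _ = ↑u ^ 3 * ι A := by rw [hA, map_mul, map_pow, hu, ← pow_mul, mul_comm k 3]
  have h₁c : ↑u * Q₁.c = ι (act γ Q₀).c := by rw [hu]; exact (congrArg BQF.c h₁).symm
  have ha₂ : Q₂.a = ι A := by
    have : Q₁.a = ↑u ^ 2 * ι A := u.isUnit.mul_left_cancel (by linear_combination h₁a)
    simp only [Q₂, act_diagUnit]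
    rw [this, mul_right_comm, ← mul_pow, Units.mul_inv, one_pow, one_mul]
  have hc₂ : Q₂.c = ι ((act γ Q₀).c * m ^ k) := by
    simp only [Q₂, act_diagUnit, map_mul, map_pow, ← hu, ← h₁c]
    ring
  obtain ⟨B, hB⟩ := exists_eq_algebraMap_of_sq_eq hm (x := Q₂.b)
    (n := 1 - 4 * m + 4 * A * ((act γ Q₀).c * m ^ k)) <| by
    have hdisc : Q₂.disc = ι (1 - 4 * m) := by rw [disc_act, disc_act, hQ]
    rw [map_add, map_mul, map_mul, ← ha₂, ← hc₂, ← hdisc, disc, map_ofNat]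
    ring
  exact ⟨Q₂, Equiv.trans ⟨_, rfl⟩ ⟨_, rfl⟩, A, B, _, ha₂, hB, hc₂⟩

end Away

/-- Every binary quadratic form over `ℤ[1/m]` of discriminant `1 - 4m` is
`SL₂(ℤ[1/m])`-equivalent to a form whose coefficients all lie in the image of `ℤ`. -/
theorem equivalent_to_integral_form (m : ℤ) (hm : m ≠ 0)
    (Q : BQF (Localization.Away m))
    (hQ : Q.disc = algebraMap ℤ (Localization.Away m) (1 - 4 * m)) :
    ∃ Q' : BQF (Localization.Away m), BQF.Equiv Q Q' ∧
      ∃ a b c : ℤ,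
        Q'.a = algebraMap ℤ (Localization.Away m) a ∧
        Q'.b = algebraMap ℤ (Localization.Away m) b ∧
        Q'.c = algebraMap ℤ (Localization.Away m) c := by
  have hD : Q.disc ≠ 0 := by
    rw [hQ, ← map_zero (algebraMap ℤ _), (algebraMap_away_injective hm).ne_iff]
    omega
  obtain ⟨Q₁, hQQ₁, ha⟩ := BQF.exists_equiv_a_ne_zero hD
  obtain ⟨Q', hQ₁Q', hQ'⟩ :=
    BQF.exists_equiv_integral_of_a_ne_zero hm ha (hQQ₁.disc_eq.trans hQ)
  exact ⟨Q', hQQ₁.trans hQ₁Q', hQ'⟩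
end

section
/- Let p be a prime. Two binary quadratic forms over ℤ of discriminant 1 − 4p are SL₂(ℤ[1/p])-equivalent (after base change of their coefficients along the inclusion ℤ → ℤ[1/p]) if and only if they are SL₂(ℤ)-equivalent. -/
/-- If a vector is isotropic mod `p` for a form `a x² + (2e+1) x z + c z²` with
`a c = e² + e`, it is killed by one of the two "multiplication by ω" matrices. -/
private lemma iso_lines {F : Type*} [Field F] (a c e x z : F) (hac : a*c = e^2 + e)
    (hiso : a*x^2 + (2*e+1)*x*z + c*z^2 = 0) :
    (e*x + c*z = 0 ∧ a*x + (e+1)*z = 0) ∨ ((e+1)*x + c*z = 0 ∧ a*x + e*z = 0) := by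
  have P11 : (e*x + c*z) * ((e+1)*x + c*z) = 0 := by linear_combination c*hiso - x^2*hac
  have P22 : (a*x + (e+1)*z) * (a*x + e*z) = 0 := by linear_combination a*hiso - z^2*hac
  have P12 : (e*x + c*z) * (a*x + e*z) = 0 := by linear_combination e*hiso + x*z*hac
  have P21 : (a*x + (e+1)*z) * ((e+1)*x + c*z) = 0 := by
    linear_combination (e+1)*hiso + x*z*hac
  by_cases h1 : e*x + c*z = 0
  · by_cases h2 : a*x + (e+1)*z = 0
    · exact Or.inl ⟨h1, h2⟩
    · rcases mul_eq_zero.mp P22 with h | h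
      · exact absurd h h2
      · rcases mul_eq_zero.mp P21 with h' | h'
        · exact absurd h' h2
        · exact Or.inr ⟨h', h⟩
  · rcases mul_eq_zero.mp P11 with h | h
    · exact absurd h h1
    · rcases mul_eq_zero.mp P12 with h' | h'
      · exact absurd h' h1
      · exact Or.inr ⟨h, h'⟩

/-- Two isotropic, mutually proportional columns are killed by a common matrix. -/
private lemma iso_pair {F : Type*} [Field F] (a c e x y z w : F) (hac : a*c = e^2 + e)
    (h1 : a*x^2 + (2*e+1)*x*z + c*z^2 = 0)
    (h3 : a*y^2 + (2*e+1)*y*w + c*w^2 = 0)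
    (hd : x*w - y*z = 0) :
    (e*x + c*z = 0 ∧ a*x + (e+1)*z = 0 ∧ e*y + c*w = 0 ∧ a*y + (e+1)*w = 0)
    ∨ ((e+1)*x + c*z = 0 ∧ a*x + e*z = 0 ∧ (e+1)*y + c*w = 0 ∧ a*y + e*w = 0) := by
  rcases iso_lines a c e x z hac h1 with ⟨l1, l2⟩ | ⟨r1, r2⟩ <;>
    rcases iso_lines a c e y w hac h3 with ⟨l3, l4⟩ | ⟨r3, r4⟩
  · exact Or.inl ⟨l1, l2, l3, l4⟩
  · -- column 1 on left line, column 2 on right line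
    by_cases hx : x = 0
    · by_cases hz : z = 0
      · exact Or.inr ⟨by rw [hx, hz]; ring, by rw [hx, hz]; ring, r3, r4⟩
      · refine Or.inl ⟨l1, l2, ?_, ?_⟩
        · have : (e*y + c*w) * z = 0 := by linear_combination w*l1 - e*hd
          exact (mul_eq_zero.mp this).resolve_right hz
        · have : (a*y + (e+1)*w) * z = 0 := by linear_combination w*l2 - a*hd
          exact (mul_eq_zero.mp this).resolve_right hz
    · refine Or.inl ⟨l1, l2, ?_, ?_⟩
      · have : (e*y + c*w) * x = 0 := by linear_combination y*l1 + c*hd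
        exact (mul_eq_zero.mp this).resolve_right hx
      · have : (a*y + (e+1)*w) * x = 0 := by linear_combination y*l2 + (e+1)*hd
        exact (mul_eq_zero.mp this).resolve_right hx
  · -- column 1 on right line, column 2 on left line
    by_cases hx : x = 0
    · by_cases hz : z = 0
      · exact Or.inl ⟨by rw [hx, hz]; ring, by rw [hx, hz]; ring, l3, l4⟩
      · refine Or.inr ⟨r1, r2, ?_, ?_⟩
        · have : ((e+1)*y + c*w) * z = 0 := by linear_combination w*r1 - (e+1)*hd
          exact (mul_eq_zero.mp this).resolve_right hz
        · have : (a*y + e*w) * z = 0 := by linear_combination w*r2 - a*hd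
          exact (mul_eq_zero.mp this).resolve_right hz
    · refine Or.inr ⟨r1, r2, ?_, ?_⟩
      · have : ((e+1)*y + c*w) * x = 0 := by linear_combination y*r1 + c*hd
        exact (mul_eq_zero.mp this).resolve_right hx
      · have : (a*y + e*w) * x = 0 := by linear_combination y*r2 + e*hd
        exact (mul_eq_zero.mp this).resolve_right hx
  · exact Or.inr ⟨r1, r2, r3, r4⟩


private lemma divstep (P a c e x y z w m a₂ b₂ c₂ x1 y1 z1 w1 : ℤ) (hP : P ≠ 0)
    (hac : a*c = e^2 + e + P)
    (E1 : a*x^2 + (2*e+1)*x*z + c*z^2 = P*m*a₂)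
    (E2 : 2*a*x*y + (2*e+1)*(x*w + y*z) + 2*c*z*w = P*m*b₂)
    (E3 : a*y^2 + (2*e+1)*y*w + c*w^2 = P*m*c₂)
    (E4 : x*w - y*z = P*m)
    (hx1 : e*x + c*z = P*x1) (hz1 : a*x + (e+1)*z = P*z1)
    (hy1 : e*y + c*w = P*y1) (hw1 : a*y + (e+1)*w = P*w1) :
    ∃ x' y' z' w',
      a*x'^2 + (2*e+1)*x'*z' + c*z'^2 = m*a₂ ∧
      2*a*x'*y' + (2*e+1)*(x'*w' + y'*z') + 2*c*z'*w' = m*b₂ ∧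
      a*y'^2 + (2*e+1)*y'*w' + c*w'^2 = m*c₂ ∧
      x'*w' - y'*z' = m := by
  have hP2 : P^2 ≠ 0 := pow_ne_zero _ hP
  refine ⟨-x1, -y1, z1, w1, ?_, ?_, ?_, ?_⟩
  · apply mul_left_cancel₀ hP2
    linear_combination (P*z1 + 2*e*P*z1 - a*P*x1 - a*e*x - a*c*z) * hx1
      + (e*x + 2*e^2*x - c*P*z1 + c*e*z - a*c*x) * hz1 + P*E1
      + (x*z + 2*e*x*z + c*z^2 + a*x^2) * hac
  · apply mul_left_cancel₀ hP2
    linear_combination (P*w1 + 2*e*P*w1 - 2*a*P*y1) * hx1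
      + (P*y1 + 2*e*P*y1 - 2*c*P*w1) * hz1
      + (z + 3*e*z + 2*e^2*z + a*x - 2*a*c*z) * hy1
      + (e*x + 2*e^2*x - c*z - 2*a*c*x) * hw1 + P*E2
      + (y*z + x*w + 2*e*y*z + 2*e*x*w + 2*c*z*w + 2*a*x*y) * hac
  · apply mul_left_cancel₀ hP2
    linear_combination (P*w1 + 2*e*P*w1 - a*P*y1 - a*e*y - a*c*w) * hy1
      + (e*y + 2*e^2*y - c*P*w1 + c*e*w - a*c*y) * hw1 + P*E3
      + (y*w + 2*e*y*w + c*w^2 + a*y^2) * hac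
  · apply mul_left_cancel₀ hP2
    linear_combination (P*w1) * hx1 - (P*y1) * hz1 + (-z - e*z - a*x) * hy1
      + (e*x + c*z) * hw1 + P*E4 + (x*w - y*z) * hac

private lemma step (p : ℕ) (hp : p.Prime) (a c e m a₂ b₂ c₂ x y z w : ℤ)
    (hac : a*c = e^2 + e + (p:ℤ))
    (E1 : a*x^2 + (2*e+1)*x*z + c*z^2 = (p:ℤ)*m*a₂)
    (E2 : 2*a*x*y + (2*e+1)*(x*w + y*z) + 2*c*z*w = (p:ℤ)*m*b₂)
    (E3 : a*y^2 + (2*e+1)*y*w + c*w^2 = (p:ℤ)*m*c₂)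
    (E4 : x*w - y*z = (p:ℤ)*m) :
    ∃ x' y' z' w',
      a*x'^2 + (2*e+1)*x'*z' + c*z'^2 = m*a₂ ∧
      2*a*x'*y' + (2*e+1)*(x'*w' + y'*z') + 2*c*z'*w' = m*b₂ ∧
      a*y'^2 + (2*e+1)*y'*w' + c*w'^2 = m*c₂ ∧
      x'*w' - y'*z' = m := by
  haveI : Fact p.Prime := ⟨hp⟩
  haveI : NeZero p := ⟨hp.ne_zero⟩
  have hP : (p:ℤ) ≠ 0 := Int.natCast_ne_zero.mpr hp.ne_zero
  have h0 : ((p:ℕ) : ZMod p) = 0 := ZMod.natCast_self p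
  have c1 : (a : ZMod p)*(x : ZMod p)^2 + (2*(e : ZMod p)+1)*(x : ZMod p)*(z : ZMod p)
      + (c : ZMod p)*(z : ZMod p)^2 = 0 := by
    have h := congrArg (fun t : ℤ => (t : ZMod p)) E1
    push_cast at h
    rw [h0] at h
    linear_combination h
  have c3 : (a : ZMod p)*(y : ZMod p)^2 + (2*(e : ZMod p)+1)*(y : ZMod p)*(w : ZMod p)
      + (c : ZMod p)*(w : ZMod p)^2 = 0 := by
    have h := congrArg (fun t : ℤ => (t : ZMod p)) E3
    push_cast at h
    rw [h0] at h
    linear_combination h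
  have c4 : (x : ZMod p)*(w : ZMod p) - (y : ZMod p)*(z : ZMod p) = 0 := by
    have h := congrArg (fun t : ℤ => (t : ZMod p)) E4
    push_cast at h
    rw [h0] at h
    linear_combination h
  have cac : (a : ZMod p)*(c : ZMod p) = (e : ZMod p)^2 + (e : ZMod p) := by
    have h := congrArg (fun t : ℤ => (t : ZMod p)) hac
    push_cast at h
    rw [h0] at h
    linear_combination h
  have todvd : ∀ t : ℤ, ((t : ZMod p) = 0) → (p:ℤ) ∣ t := fun t ht =>
    (ZMod.intCast_zmod_eq_zero_iff_dvd t p).mp ht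
  rcases iso_pair (a : ZMod p) (c : ZMod p) (e : ZMod p) (x : ZMod p) (y : ZMod p)
      (z : ZMod p) (w : ZMod p) cac c1 c3 c4 with ⟨k1, k2, k3, k4⟩ | ⟨k1, k2, k3, k4⟩
  · obtain ⟨x1, hx1⟩ := todvd (e*x + c*z) (by push_cast; linear_combination k1)
    obtain ⟨z1, hz1⟩ := todvd (a*x + (e+1)*z) (by push_cast; linear_combination k2)
    obtain ⟨y1, hy1⟩ := todvd (e*y + c*w) (by push_cast; linear_combination k3)
    obtain ⟨w1, hw1⟩ := todvd (a*y + (e+1)*w) (by push_cast; linear_combination k4)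
    exact divstep (p:ℤ) a c e x y z w m a₂ b₂ c₂ x1 y1 z1 w1 hP hac E1 E2 E3 E4 hx1 hz1 hy1 hw1
  · obtain ⟨x1, hx1⟩ := todvd ((e+1)*x + c*z) (by push_cast; linear_combination k1)
    obtain ⟨z1, hz1⟩ := todvd (a*x + e*z) (by push_cast; linear_combination k2)
    obtain ⟨y1, hy1⟩ := todvd ((e+1)*y + c*w) (by push_cast; linear_combination k3)
    obtain ⟨w1, hw1⟩ := todvd (a*y + e*w) (by push_cast; linear_combination k4)
    obtain ⟨X, Y, Z, W, j1, j2, j3, j4⟩ :=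
      divstep (p:ℤ) (-a) (-c) (-(e+1)) x y z w m (-a₂) (-b₂) (-c₂) (-x1) (-y1) (-z1) (-w1) hP
        (by linear_combination hac) (by linear_combination -E1) (by linear_combination -E2)
        (by linear_combination -E3) E4 (by linear_combination -hx1)
        (by linear_combination -hz1) (by linear_combination -hy1) (by linear_combination -hw1)
    exact ⟨X, Y, Z, W, by linear_combination -j1, by linear_combination -j2,
      by linear_combination -j3, j4⟩

private lemma descend (p : ℕ) (hp : p.Prime) (a c e a₂ b₂ c₂ : ℤ)
    (hac : a*c = e^2 + e + (p:ℤ)) (k : ℕ) :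
    ∀ (x y z w : ℤ),
      a*x^2 + (2*e+1)*x*z + c*z^2 = (p:ℤ)^k*a₂ →
      2*a*x*y + (2*e+1)*(x*w + y*z) + 2*c*z*w = (p:ℤ)^k*b₂ →
      a*y^2 + (2*e+1)*y*w + c*w^2 = (p:ℤ)^k*c₂ →
      x*w - y*z = (p:ℤ)^k →
      ∃ x' y' z' w',
        a*x'^2 + (2*e+1)*x'*z' + c*z'^2 = a₂ ∧
        2*a*x'*y' + (2*e+1)*(x'*w' + y'*z') + 2*c*z'*w' = b₂ ∧
        a*y'^2 + (2*e+1)*y'*w' + c*w'^2 = c₂ ∧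
        x'*w' - y'*z' = 1 := by
  induction k with
  | zero =>
    intro x y z w E1 E2 E3 E4
    exact ⟨x, y, z, w, by simpa using E1, by simpa using E2, by simpa using E3,
      by simpa using E4⟩
  | succ k ih =>
    intro x y z w E1 E2 E3 E4
    obtain ⟨X, Y, Z, W, f1, f2, f3, f4⟩ :=
      step p hp a c e ((p:ℤ)^k) a₂ b₂ c₂ x y z w hac (by linear_combination E1)
        (by linear_combination E2) (by linear_combination E3) (by linear_combination E4)
    exact ih X Y Z W f1 f2 f3 f4


private lemma bqf_ext {R : Type*} [CommRing R] :
    ∀ {Q Q' : BQF R}, Q.a = Q'.a → Q.b = Q'.b → Q.c = Q'.c → Q = Q'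
  | ⟨_,_,_⟩, ⟨_,_,_⟩, rfl, rfl, rfl => rfl


/-- Two integer binary quadratic forms of discriminant `1 - 4p`, `p` prime, are
`SL₂(ℤ[1/p])`-equivalent (after base change along `ℤ → ℤ[1/p]`) if and only if they
are `SL₂(ℤ)`-equivalent. -/
theorem equiv_away_iff_equiv_int (p : ℕ) (hp : p.Prime) (Q₁ Q₂ : BQF ℤ)
    (h₁ : Q₁.disc = 1 - 4 * (p : ℤ)) (h₂ : Q₂.disc = 1 - 4 * (p : ℤ)) :
    BQF.Equiv (Q₁.map (algebraMap ℤ (Localization.Away ((p : ℤ)))))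
              (Q₂.map (algebraMap ℤ (Localization.Away ((p : ℤ))))) ↔
    BQF.Equiv Q₁ Q₂ := by
  obtain ⟨a, b, c⟩ := Q₁
  obtain ⟨a₂, b₂, c₂⟩ := Q₂
  simp only [BQF.disc] at h₁ h₂
  set A := Localization.Away ((p : ℤ)) with hA
  set J := algebraMap ℤ A with hJdef
  constructor
  · rintro ⟨g, hg⟩
    -- b is odd
    have hbodd : Odd b := by
      rcases Int.even_or_odd b with ⟨t, ht⟩ | h
      · exfalso
        rw [ht] at h₁
        have h4 : 4*(t^2 - a*c + (p:ℤ)) = 1 := by linear_combination h₁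
        omega
      · exact h
    obtain ⟨e, he⟩ := hbodd
    have hac : a*c = e^2 + e + (p:ℤ) := by
      apply mul_left_cancel₀ (show (4:ℤ) ≠ 0 by norm_num)
      rw [he] at h₁
      linear_combination -h₁
    -- common denominator for entries of g
    have hple : Submonoid.powers ((p:ℤ)) ≤ nonZeroDivisors ℤ :=
      powers_le_nonZeroDivisors_of_noZeroDivisors
        (by exact_mod_cast hp.ne_zero)
    have hJinj : Function.Injective J := IsLocalization.injective A hple
    obtain ⟨bden, hbden⟩ := IsLocalization.exist_integer_multiples
      (Submonoid.powers ((p:ℤ))) (Finset.univ : Finset (Fin 2 × Fin 2))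
      (fun ij => g.1 ij.1 ij.2)
    obtain ⟨n, hn⟩ := (Submonoid.mem_powers_iff _ _).mp bden.2
    have hint : ∀ i j : Fin 2, ∃ H : ℤ, J H = (J (p:ℤ))^n * g.1 i j := by
      intro i j
      obtain ⟨H, hH⟩ := hbden (i, j) (Finset.mem_univ _)
      exact ⟨H, by rw [hH, Algebra.smul_def, ← hn, map_pow]⟩
    obtain ⟨H00, e00⟩ := hint 0 0
    obtain ⟨H01, e01⟩ := hint 0 1
    obtain ⟨H10, e10⟩ := hint 1 0
    obtain ⟨H11, e11⟩ := hint 1 1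
    -- component equations over A
    have ea := congrArg BQF.a hg
    have eb := congrArg BQF.b hg
    have ec := congrArg BQF.c hg
    simp only [BQF.act, BQF.map] at ea eb ec
    have edet : g.1 0 0 * g.1 1 1 - g.1 0 1 * g.1 1 0 = 1 := by
      rw [← Matrix.det_fin_two]; exact g.2
    -- integer equations
    have F1 : a*H00^2 + b*H00*H10 + c*H10^2 = (p:ℤ)^(2*n)*a₂ := by
      apply hJinj
      simp only [map_add, map_mul, map_pow]
      rw [e00, e10]
      linear_combination ((J (p:ℤ))^n)^2 * ea
    have F2 : 2*a*H00*H01 + b*(H00*H11 + H01*H10) + 2*c*H10*H11 = (p:ℤ)^(2*n)*b₂ := by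
      apply hJinj
      simp only [map_add, map_mul, map_pow, map_ofNat]
      rw [e00, e01, e10, e11]
      linear_combination ((J (p:ℤ))^n)^2 * eb
    have F3 : a*H01^2 + b*H01*H11 + c*H11^2 = (p:ℤ)^(2*n)*c₂ := by
      apply hJinj
      simp only [map_add, map_mul, map_pow]
      rw [e01, e11]
      linear_combination ((J (p:ℤ))^n)^2 * ec
    have F4 : H00*H11 - H01*H10 = (p:ℤ)^(2*n) := by
      apply hJinj
      simp only [map_sub, map_mul, map_pow, map_one]
      rw [e00, e01, e10, e11]
      linear_combination ((J (p:ℤ))^n)^2 * edet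
    rw [he] at F1 F2 F3
    obtain ⟨x', y', z', w', G1, G2, G3, G4⟩ :=
      descend p hp a c e a₂ b₂ c₂ hac (2*n) H00 H01 H10 H11 F1 F2 F3 F4
    refine ⟨⟨!![x', y'; z', w'], by rw [Matrix.det_fin_two_of]; linarith [G4]⟩, ?_⟩
    apply bqf_ext
    · show a * _ ^ 2 + b * _ * _ + c * _ ^ 2 = a₂
      simp
      linear_combination G1 + (x'*z')*he
    · show 2 * a * _ * _ + b * (_ * _ + _ * _) + 2 * c * _ * _ = b₂
      simp
      linear_combination G2 + (x'*w' + y'*z')*he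
    · show a * _ ^ 2 + b * _ * _ + c * _ ^ 2 = c₂
      simp
      linear_combination G3 + (y'*w')*he
  · rintro ⟨g, hg⟩
    refine ⟨Matrix.SpecialLinearGroup.map J g, ?_⟩
    have ea := congrArg BQF.a hg
    have eb := congrArg BQF.b hg
    have ec := congrArg BQF.c hg
    simp only [BQF.act] at ea eb ec
    apply bqf_ext <;>
      simp only [BQF.act, BQF.map, Matrix.SpecialLinearGroup.map_apply_coe,
        RingHom.mapMatrix_apply, Matrix.map_apply] <;>
      [rw [← ea]; rw [← eb]; rw [← ec]] <;>
      simp only [map_add, map_mul, map_pow, map_ofNat]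
end

section
/- For every squarefree positive integer d, the number of triples (a, b, c) ∈ (ℤ/dℤ)³ satisfying a·c = b² + b equals d · ∏_{p prime, p ∣ d} (p + 1). -/
/-!
By the Chinese remainder theorem, `ZMod d` for squarefree `d` is the product of the fields
`ZMod p`, `p ∣ d`, and points of `a c = b² + b` over a product ring are tuples of points over
the factors. Over a field with `q` elements, sort the points by `a`: for `a ≠ 0` a point is
determined by `b` (`c = (b² + b) / a`), giving `q` points; for `a = 0` we need `b ∈ {0, -1}` with
`c` free, giving `2 q`. Altogether `(q - 1) q + 2 q = q (q + 1)`.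
-/

open Finset

theorem sq_add_self_eq_zero_iff {R : Type*} [CommRing R] [NoZeroDivisors R] {b : R} :
    b ^ 2 + b = 0 ↔ b = 0 ∨ b = -1 := by
  rw [show b ^ 2 + b = b * (b + 1) by ring, mul_eq_zero, add_eq_zero_iff_eq_neg]

theorem card_sq_add_self_eq_zero (R : Type*) [CommRing R] [NoZeroDivisors R] [Nontrivial R] :
    Nat.card {b : R // b ^ 2 + b = 0} = 2 := by
  have hroots : {b : R | b ^ 2 + b = 0} = {0, -1} := by
    ext b
    simp [sq_add_self_eq_zero_iff]
  change Nat.card {b : R | b ^ 2 + b = 0} = 2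
  rw [hroots, Nat.card_coe_set_eq, Set.ncard_pair (neg_ne_zero.mpr one_ne_zero).symm]

def QuadricPoints (R : Type*) [CommRing R] : Type _ :=
  {v : R × R × R // v.1 * v.2.2 = v.2.1 ^ 2 + v.2.1}

namespace QuadricPoints

abbrev Fiber (R : Type*) [CommRing R] (a : R) : Type _ :=
  {bc : R × R // a * bc.2 = bc.1 ^ 2 + bc.1}

section CommRing

variable {R : Type*} [CommRing R]

def congr {S : Type*} [CommRing S] (e : R ≃+* S) : QuadricPoints R ≃ QuadricPoints S :=
  Equiv.subtypeEquiv (e.toEquiv.prodCongr (e.toEquiv.prodCongr e.toEquiv)) fun v => by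
    simp [← map_mul, ← map_pow, ← map_add, e.injective.eq_iff]

def piEquiv {ι : Type*} (R : ι → Type*) [∀ i, CommRing (R i)] :
    QuadricPoints (Π i, R i) ≃ Π i, QuadricPoints (R i) where
  toFun v i := ⟨(v.1.1 i, v.1.2.1 i, v.1.2.2 i), congrFun v.2 i⟩
  invFun w := ⟨(fun i => (w i).1.1, fun i => (w i).1.2.1, fun i => (w i).1.2.2),
    funext fun i => (w i).2⟩
  left_inv _ := rfl
  right_inv _ := rfl

variable (R) in
def sigmaFiberEquiv : QuadricPoints R ≃ Σ a : R, Fiber R a where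
  toFun v := ⟨v.1.1, (v.1.2.1, v.1.2.2), v.2⟩
  invFun w := ⟨(w.1, w.2.1.1, w.2.1.2), w.2.2⟩
  left_inv _ := rfl
  right_inv _ := rfl

def fiberEquivOfUnit (u : Rˣ) : Fiber R u ≃ R where
  toFun bc := bc.1.1
  invFun b := ⟨(b, ↑u⁻¹ * (b ^ 2 + b)), u.mul_inv_cancel_left _⟩
  left_inv := by
    rintro ⟨⟨b, c⟩, h⟩
    ext
    · rfl
    · exact (congrArg ((↑u⁻¹ : R) * ·) h).symm.trans (u.inv_mul_cancel_left c)
  right_inv _ := rfl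

variable (R) in
def fiberZeroEquiv : Fiber R 0 ≃ {b : R // b ^ 2 + b = 0} × R where
  toFun bc := (⟨bc.1.1, by simpa using bc.2.symm⟩, bc.1.2)
  invFun w := ⟨(w.1, w.2), by simpa using w.1.2.symm⟩
  left_inv _ := rfl
  right_inv _ := rfl

end CommRing

theorem card_fiber (F : Type*) [Field F] [Fintype F] [DecidableEq F] (a : F) :
    Nat.card (Fiber F a) = Fintype.card F + if a = 0 then Fintype.card F else 0 := by
  rw [← Nat.card_eq_fintype_card]
  split_ifs with ha
  · rw [ha, Nat.card_congr (fiberZeroEquiv F), Nat.card_prod, card_sq_add_self_eq_zero]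
    ring
  · exact Nat.card_congr (fiberEquivOfUnit (Units.mk0 a ha))

theorem card_of_field (F : Type*) [Field F] [Fintype F] :
    Nat.card (QuadricPoints F) = Fintype.card F * (Fintype.card F + 1) := by
  classical
  rw [Nat.card_congr (sigmaFiberEquiv F), Nat.card_sigma]
  simp only [card_fiber, sum_add_distrib, sum_const, card_univ, smul_eq_mul, sum_ite_eq',
    mem_univ, if_true]
  ring

theorem card_zmod_prime (p : ℕ) [Fact p.Prime] :
    Nat.card (QuadricPoints (ZMod p)) = p * (p + 1) := by
  rw [card_of_field, ZMod.card]

end QuadricPoints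

noncomputable def ZMod.ringEquivPiOfSquarefree {d : ℕ} (hd : Squarefree d) :
    ZMod d ≃+* Π p : d.primeFactors, ZMod p :=
  (ZMod.ringEquivCongr ((Nat.prod_primeFactors_of_squarefree hd).symm.trans
    (prod_coe_sort _ _).symm)).trans
    (ZMod.prodEquivPi _ fun p q hpq =>
      (Nat.coprime_primes (Nat.prime_of_mem_primeFactors p.2)
        (Nat.prime_of_mem_primeFactors q.2)).mpr (Subtype.coe_ne_coe.mpr hpq))

theorem count_solutions_mod_d_general (d : ℕ) (hsq : Squarefree d) :
    Nat.card {v : ZMod d × ZMod d × ZMod d // v.1 * v.2.2 = v.2.1 ^ 2 + v.2.1}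
      = d * ∏ p ∈ d.primeFactors, (p + 1) := by
  have hcrt := (QuadricPoints.congr (ZMod.ringEquivPiOfSquarefree hsq)).trans
    (QuadricPoints.piEquiv fun p : d.primeFactors => ZMod p)
  have (p : d.primeFactors) : Fact (p : ℕ).Prime := ⟨Nat.prime_of_mem_primeFactors p.2⟩
  calc Nat.card (QuadricPoints (ZMod d))
      = ∏ p : d.primeFactors, (p : ℕ) * (p + 1) := by
        simp only [Nat.card_congr hcrt, Nat.card_pi, QuadricPoints.card_zmod_prime]
    _ = d * ∏ p ∈ d.primeFactors, (p + 1) := by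
        rw [prod_coe_sort d.primeFactors (fun p => p * (p + 1)), prod_mul_distrib,
          Nat.prod_primeFactors_of_squarefree hsq]

/-- For a squarefree positive integer `d`, the number of triples
`(a, b, c) ∈ (ℤ/dℤ)³` with `a·c = b² + b` equals `d · ∏_{p ∣ d} (p + 1)`. -/
theorem count_solutions_mod_d (d : ℕ) (hd : 0 < d) (hsq : Squarefree d) :
    Nat.card {v : ZMod d × ZMod d × ZMod d // v.1 * v.2.2 = v.2.1 ^ 2 + v.2.1}
      = d * ∏ p ∈ d.primeFactors, (p + 1) :=
  count_solutions_mod_d_general d hsq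
end
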